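/- The number of lattice paths from (0,0) to (p,q) with steps ±1 that never return to height 0 after time 0 equals (q/p) · C(p, (p+q)/2), for integers p ≥ 1 and q > 0 with p + q even. -/

import Mathlib

/-!
Deleting the last step of a zero-avoiding path of length `p + 1` ending at `t ≠ 0` leaves a
zero-avoiding path of length `p` ending at `t - 1` or `t + 1`, and conversely. So the counts
`N p q` obey the ballot recurrence `N (p + 1) q = N p (q - 1) + N p (q + 1)` for `q ≥ 1`, with
`N (p + 1) 0 = 0`. By Pascal's rule and the absorption identity `(k + 1) C(p, k + 1) =
(p - k) C(p, k)`, the closed form `(q / p) C(p, (p + q) / 2)` obeys the same recurrence when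
`p + q` is even, and the two agree at `p = 1`.
-/

def ZeroAvoidingPath (p : ℕ) (t : ℤ) : Type :=
  {h : Fin (p + 1) → ℤ //
    h 0 = 0 ∧ h (Fin.last p) = t ∧
    (∀ i : Fin p, |h i.succ - h i.castSucc| = 1) ∧
    ∀ i : Fin (p + 1), 1 ≤ (i : ℕ) → h i ≠ 0}

def ballotNumber (p q : ℕ) : ℚ :=
  q / p * p.choose ((p + q) / 2)

lemma ballotNumber_add_ballotNumber {p r : ℕ} (hp : p ≠ 0) (hpr : Even (p + r)) :
    ballotNumber p r + ballotNumber p (r + 2) = ballotNumber (p + 1) (r + 1) := by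
  obtain ⟨k, hk⟩ := hpr
  have absorb : ((k + 1 : ℕ) : ℚ) * p.choose (k + 1) = (p - k : ℚ) * p.choose k := by
    rcases le_or_gt k p with hkp | hkp
    · rw [← Nat.cast_sub hkp, mul_comm, ← Nat.cast_mul, ← Nat.cast_mul, Nat.choose_succ_right_eq,
        mul_comm]
    · simp [Nat.choose_eq_zero_of_lt hkp, Nat.choose_eq_zero_of_lt (Nat.lt_succ_of_lt hkp)]
  have hr : (r : ℚ) = 2 * k - p := by
    rw [eq_sub_iff_add_eq, add_comm, two_mul]
    exact_mod_cast hk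
  rw [ballotNumber, ballotNumber, ballotNumber, show (p + r) / 2 = k by omega,
    show (p + (r + 2)) / 2 = k + 1 by omega, show (p + 1 + (r + 1)) / 2 = k + 1 by omega,
    Nat.choose_succ_succ']
  push_cast at absorb ⊢
  field_simp
  rw [hr]
  linear_combination 2 * absorb

namespace ZeroAvoidingPath

variable {p : ℕ} {s t : ℤ}

def snoc (b : ZeroAvoidingPath p s) (t : ℤ) (hst : |t - s| = 1) (ht : t ≠ 0) :
    ZeroAvoidingPath (p + 1) t :=
  ⟨Fin.snoc b.1 t, (Fin.snoc_castSucc (i := 0) ..).trans b.2.1, Fin.snoc_last _ _,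
    Fin.lastCases (by rwa [Fin.succ_last, Fin.snoc_last, Fin.snoc_castSucc, b.2.2.1])
      fun j => by rw [Fin.succ_castSucc, Fin.snoc_castSucc, Fin.snoc_castSucc]; exact b.2.2.2.1 j,
    Fin.lastCases (fun _ => by rwa [Fin.snoc_last])
      fun j hj => by rw [Fin.snoc_castSucc]; exact b.2.2.2.2 j hj⟩

def init (a : ZeroAvoidingPath (p + 1) t) (s : ℤ) (hs : a.1 (Fin.last p).castSucc = s) :
    ZeroAvoidingPath p s :=
  ⟨Fin.init a.1, a.2.1, hs,
    fun i => by simpa only [Fin.init, Fin.succ_castSucc] using a.2.2.2.1 i.castSucc,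
    fun i hi => a.2.2.2.2 _ hi⟩

lemma snoc_val (b : ZeroAvoidingPath p s) (t : ℤ) (hst : |t - s| = 1) (ht : t ≠ 0) :
    (b.snoc t hst ht).1 = Fin.snoc b.1 t := rfl

lemma snoc_init (a : ZeroAvoidingPath (p + 1) t) (s : ℤ) (hs : a.1 (Fin.last p).castSucc = s)
    (hst : |t - s| = 1) (ht : t ≠ 0) : (a.init s hs).snoc t hst ht = a := by
  apply Subtype.ext
  conv_rhs => rw [← Fin.snoc_init_self a.1, a.2.2.1]
  rfl

lemma snoc_injective (t : ℤ) (hst : |t - s| = 1) (ht : t ≠ 0) :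
    Function.Injective fun b : ZeroAvoidingPath p s => b.snoc t hst ht := by
  intro b b' hb
  apply Subtype.ext
  simpa only [snoc_val, Fin.init_snoc] using congrArg (fun a => Fin.init a.1) hb

lemma snoc_val_castSucc_last (b : ZeroAvoidingPath p s) (t : ℤ) (hst : |t - s| = 1)
    (ht : t ≠ 0) : (b.snoc t hst ht).1 (Fin.last p).castSucc = s := by
  rw [snoc_val, Fin.snoc_castSucc]
  exact b.2.2.1

noncomputable def sumEquiv (ht : t ≠ 0) :
    ZeroAvoidingPath p (t - 1) ⊕ ZeroAvoidingPath p (t + 1) ≃ ZeroAvoidingPath (p + 1) t :=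
  have h_down : |t - (t - 1)| = 1 := by simp
  have h_up : |t - (t + 1)| = 1 := by simp
  Equiv.ofBijective (Sum.elim (snoc · t h_down ht) (snoc · t h_up ht)) <| by
    refine ⟨(snoc_injective t h_down ht).sumElim (snoc_injective t h_up ht) fun b b' hb => ?_,
      fun a => ?_⟩
    · have := congrArg (fun a => a.1 (Fin.last p).castSucc) hb
      simp only [snoc_val_castSucc_last] at this
      omega
    · have h_step := a.2.2.2.1 (Fin.last p)
      rw [Fin.succ_last, a.2.2.1] at h_step
      rcases (abs_eq zero_le_one).1 h_step with h | h
      · exact ⟨.inl (a.init _ (by omega)), snoc_init a _ _ (by omega) ht⟩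
      · exact ⟨.inr (a.init _ (by omega)), snoc_init a _ _ (by omega) ht⟩

instance isEmpty_zero : IsEmpty (ZeroAvoidingPath (p + 1) 0) :=
  ⟨fun a => a.2.2.2.2 (Fin.last _) (by simp) a.2.2.1⟩

instance : Subsingleton (ZeroAvoidingPath 0 t) :=
  ⟨fun a b => Subtype.ext <| funext fun i => by rw [Fin.fin_one_eq_zero i, a.2.1, b.2.1]⟩

instance finite : ∀ p t, Finite (ZeroAvoidingPath p t)
  | 0, _ => Finite.of_subsingleton
  | p + 1, t => by
    by_cases ht : t = 0
    · subst ht; infer_instance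
    · have := finite p (t - 1)
      have := finite p (t + 1)
      exact .of_equiv _ (sumEquiv ht)

lemma card_succ (ht : t ≠ 0) : Nat.card (ZeroAvoidingPath (p + 1) t) =
    Nat.card (ZeroAvoidingPath p (t - 1)) + Nat.card (ZeroAvoidingPath p (t + 1)) := by
  rw [← Nat.card_sum, Nat.card_congr (sumEquiv ht)]

lemma card_length_zero (t : ℤ) : Nat.card (ZeroAvoidingPath 0 t) = if t = 0 then 1 else 0 := by
  split_ifs with ht
  · subst ht
    have : Nonempty (ZeroAvoidingPath 0 0) :=
      ⟨⟨0, rfl, rfl, finZeroElim, fun i hi => absurd i.2 (by omega)⟩⟩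
    exact Nat.card_eq_one_iff_unique.2 ⟨inferInstance, this⟩
  · have : IsEmpty (ZeroAvoidingPath 0 t) := ⟨fun a => ht (a.2.2.1.symm.trans a.2.1)⟩
    exact Nat.card_of_isEmpty

theorem card_eq_ballotNumber {p : ℕ} (hp : 1 ≤ p) (q : ℕ) (hpq : Even (p + q)) :
    (Nat.card (ZeroAvoidingPath p q) : ℚ) = ballotNumber p q := by
  induction p, hp using Nat.le_induction generalizing q with
  | base =>
    obtain ⟨j, hj⟩ := hpq
    obtain ⟨i, rfl⟩ : ∃ i, q = 2 * i + 1 := ⟨j - 1, by omega⟩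
    rw [card_succ (by omega), card_length_zero, card_length_zero, ballotNumber]
    rcases i with _ | i
    · simp
    · rw [Nat.choose_eq_zero_of_lt (by omega), if_neg (by omega), if_neg (by omega)]
      simp
  | succ p hp ih =>
    rcases q with _ | r
    · simp [ballotNumber]
    have hpr : Even (p + r) := by
      obtain ⟨k, hk⟩ := hpq
      exact ⟨k - 1, by omega⟩
    have h_down : ((r + 1 : ℕ) : ℤ) - 1 = (r : ℤ) := by omega
    have h_up : ((r + 1 : ℕ) : ℤ) + 1 = ((r + 2 : ℕ) : ℤ) := by omega
    rw [card_succ (by omega), h_down, h_up, Nat.cast_add, ih r hpr,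
      ih (r + 2) (by rw [← add_assoc]; exact hpr.add even_two),
      ballotNumber_add_ballotNumber (by omega) hpr]

end ZeroAvoidingPath

theorem ballot_path_count_general (p q : ℕ) (hp : 1 ≤ p) (hpq : Even (p + q)) :
    (Nat.card {h : Fin (p + 1) → ℤ //
        h 0 = 0 ∧ h (Fin.last p) = (q : ℤ) ∧
        (∀ i : Fin p, |h i.succ - h i.castSucc| = 1) ∧
        ∀ i : Fin (p + 1), 1 ≤ (i : ℕ) → h i ≠ 0} : ℚ)
      = ((q : ℚ) / (p : ℚ)) * (p.choose ((p + q) / 2) : ℚ) :=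
  ZeroAvoidingPath.card_eq_ballotNumber hp q hpq

/-- The number of ±1-step lattice paths from (0,0) to (p,q), q > 0, that never
return to height 0 after time 0, equals (q/p)·C(p, (p+q)/2), for p ≥ 1 and
p + q even. -/
theorem ballot_path_count (p q : ℕ) (hp : 1 ≤ p) (hq : 0 < q) (hpq : Even (p + q)) :
    (Nat.card {h : Fin (p + 1) → ℤ //
        h 0 = 0 ∧ h (Fin.last p) = (q : ℤ) ∧
        (∀ i : Fin p, |h i.succ - h i.castSucc| = 1) ∧
        ∀ i : Fin (p + 1), 1 ≤ (i : ℕ) → h i ≠ 0} : ℚ)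
      = ((q : ℚ) / (p : ℚ)) * (p.choose ((p + q) / 2) : ℚ) :=
  ballot_path_count_general p q hp hpq
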